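/- Let q(s) = s^{ν−1} + a_{ν−1}s^{ν−2} + ⋯ + a_2 s + a_1 be a Hurwitz real polynomial and let 0 < g̲ ≤ ḡ be real bounds. Then there exists a_0* > 0 such that for all 0 < a_0 ≤ a_0* and all γ ∈ [g̲/g*, ḡ/g*] (for fixed g* ∈ [g̲, ḡ]), the polynomial p_f(s) = s·q(s) + γ·a_0 = s^ν + a_{ν−1}s^{ν−1} + ⋯ + a_1 s + γ a_0 is Hurwitz. -/
import Mathlib

open Polynomial Filter

/-- if `q` is a monic Hurwitz polynomial of degree `ν−1 ≥ 1` and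
`0 < g̲ ≤ g* ≤ ḡ`, then for all sufficiently small `a₀ > 0` and all
`γ ∈ [g̲/g*, ḡ/g*]`, the polynomial `s·q(s) + γ·a₀` is Hurwitz. -/
theorem small_a0_uniform_hurwitz
    (q : Polynomial ℝ) (hmonic : q.Monic) (hdeg : 1 ≤ q.natDegree)
    (hq : ∀ z : ℂ, (q.map (algebraMap ℝ ℂ)).IsRoot z → z.re < 0)
    (gl gs gu : ℝ) (hgl : 0 < gl) (h1 : gl ≤ gs) (h2 : gs ≤ gu) :
    ∃ a0star > (0:ℝ), ∀ a0 : ℝ, 0 < a0 → a0 ≤ a0star →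
      ∀ γ ∈ Set.Icc (gl / gs) (gu / gs),
        ∀ z : ℂ,
          ((Polynomial.X * q + Polynomial.C (γ * a0)).map
            (algebraMap ℝ ℂ)).IsRoot z → z.re < 0 := by
  have hgs : 0 < gs := lt_of_lt_of_le hgl h1
  have hgu : 0 < gu := lt_of_lt_of_le hgs h2
  set Q : Polynomial ℂ := q.map (algebraMap ℝ ℂ) with hQdef
  have hevalQ : ∀ x : ℝ, Q.eval (x : ℂ) = ((q.eval x : ℝ) : ℂ) := by
    intro x
    rw [hQdef, Polynomial.eval_map]
    exact Polynomial.eval₂_at_apply (algebraMap ℝ ℂ) x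
  -- Step 1 : q.eval 0 > 0
  have h0 : 0 < q.eval 0 := by
    rcases lt_trichotomy (q.eval 0) 0 with h | h | h
    · exfalso
      have htop : Tendsto (fun x => q.eval x) atTop atTop := by
        apply Polynomial.tendsto_atTop_of_leadingCoeff_nonneg
        · exact Polynomial.natDegree_pos_iff_degree_pos.mp (lt_of_lt_of_le zero_lt_one hdeg)
        · rw [hmonic.leadingCoeff]; norm_num
      obtain ⟨b, hb⟩ := (htop.eventually_ge_atTop 1).exists_forall_of_atTop
      have hb0 : (0:ℝ) ≤ max b 0 := le_max_right _ _
      have hmem : (0:ℝ) ∈ Set.Icc (q.eval 0) (q.eval (max b 0)) :=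
        ⟨le_of_lt h, le_trans zero_le_one (hb _ (le_max_left _ _))⟩
      obtain ⟨x, hx, hxval⟩ := intermediate_value_Icc hb0 (q.continuous_aeval.continuousOn) hmem
      have : Q.IsRoot ((x:ℝ) : ℂ) := by
        show Q.eval _ = 0
        rw [hevalQ]
        simp only [aeval_def, eval₂_eq_eval_map, Polynomial.map_id, RingHom.id_apply] at hxval
        norm_cast
        simpa using hxval
      have := hq _ this
      simp at this
      exact absurd hx.1 (not_le.mpr this)
    · exfalso
      have : Q.IsRoot ((0:ℝ) : ℂ) := by
        show Q.eval _ = 0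
        rw [hevalQ, h]; simp
      have := hq _ this
      simp at this
    · exact h
  -- Step 2 : δ such that re Q(z) > 0 for ‖z‖ ≤ δ
  have hcont : Continuous fun z : ℂ => (Q.eval z).re :=
    Complex.continuous_re.comp Q.continuous
  have hopen : IsOpen {z : ℂ | 0 < (Q.eval z).re} := isOpen_lt continuous_const hcont
  have h0mem : (0:ℂ) ∈ {z : ℂ | 0 < (Q.eval z).re} := by
    have he : Q.eval (0:ℂ) = ((q.eval 0 : ℝ) : ℂ) := by simpa using hevalQ 0
    simp [Set.mem_setOf_eq, he, h0]
  obtain ⟨δ', hδ'pos, hball⟩ := Metric.isOpen_iff.mp hopen 0 h0mem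
  set δ : ℝ := δ' / 2 with hδdef
  have hδpos : 0 < δ := by positivity
  have hδsmall : ∀ z : ℂ, ‖z‖ ≤ δ → 0 < (Q.eval z).re := by
    intro z hz
    have : z ∈ Metric.ball (0:ℂ) δ' := by
      rw [Metric.mem_ball, dist_zero_right]; linarith
    exact hball this
  -- Step 3 : ε lower bound on ‖z·Q(z)‖ for re z ≥ 0, ‖z‖ ≥ δ
  set f : Polynomial ℂ := Polynomial.X * Q with hfdef
  have hQ0 : Q ≠ 0 := (hmonic.map (algebraMap ℝ ℂ)).ne_zero
  have hfdeg : 0 < f.degree := by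
    apply Polynomial.natDegree_pos_iff_degree_pos.mp
    rw [hfdef, Polynomial.natDegree_mul Polynomial.X_ne_zero hQ0, Polynomial.natDegree_X]
    omega
  have htend : Filter.Tendsto (fun z : ℂ => ‖f.eval z‖) (Bornology.cobounded ℂ) atTop :=
    f.tendsto_norm_atTop hfdeg tendsto_norm_cobounded_atTop
  obtain ⟨R, hR⟩ : ∃ R : ℝ, ∀ z : ℂ, R ≤ ‖z‖ → 1 ≤ ‖f.eval z‖ := by
    have hev : {z : ℂ | 1 ≤ ‖f.eval z‖} ∈ Filter.cocompact ℂ := by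
      rw [← Metric.cobounded_eq_cocompact]
      exact htend.eventually_ge_atTop 1
    obtain ⟨K, hKc, hKsub⟩ := Filter.mem_cocompact.mp hev
    obtain ⟨r, hrK⟩ := hKc.isBounded.subset_closedBall 0
    refine ⟨r + 1, fun z hz => hKsub ?_⟩
    intro hzK
    have := hrK hzK
    rw [Metric.mem_closedBall, dist_zero_right] at this
    linarith
  set K' : Set ℂ := {z : ℂ | 0 ≤ z.re ∧ δ ≤ ‖z‖ ∧ ‖z‖ ≤ R} with hK'def
  have hK'c : IsCompact K' := by
    apply Metric.isCompact_of_isClosed_isBounded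
    · exact ((isClosed_le continuous_const Complex.continuous_re).inter
        ((isClosed_le continuous_const continuous_norm).inter
          (isClosed_le continuous_norm continuous_const)))
    · apply (Metric.isBounded_closedBall (x := (0:ℂ)) (r := R)).subset
      intro z hz
      rw [Metric.mem_closedBall, dist_zero_right]
      exact hz.2.2
  have hfne : ∀ z ∈ K', f.eval z ≠ 0 := by
    intro z hz hzero
    rw [hfdef, Polynomial.eval_mul, Polynomial.eval_X] at hzero
    rcases mul_eq_zero.mp hzero with h' | h'
    · rw [h'] at hz
      have := hz.2.1
      simp at this
      linarith
    · exact absurd (hq z h') (not_lt.mpr hz.1)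
  obtain ⟨ε, hεpos, hεle, hεbound⟩ :
      ∃ ε : ℝ, 0 < ε ∧ ε ≤ 1 ∧ ∀ z ∈ K', ε ≤ ‖f.eval z‖ := by
    rcases Set.eq_empty_or_nonempty K' with hE | hNE
    · exact ⟨1, one_pos, le_refl 1, by simp [hE]⟩
    · obtain ⟨z0, hz0K, hz0min⟩ := hK'c.exists_isMinOn hNE f.continuous.norm.continuousOn
      refine ⟨min ‖f.eval z0‖ 1, lt_min (norm_pos_iff.mpr (hfne z0 hz0K)) one_pos,
        min_le_right _ _, fun z hz => le_trans (min_le_left _ _) (hz0min hz)⟩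
  have hbig : ∀ z : ℂ, 0 ≤ z.re → δ ≤ ‖z‖ → ε ≤ ‖f.eval z‖ := by
    intro z hz1 hz2
    by_cases hcase : ‖z‖ ≤ R
    · exact hεbound z ⟨hz1, hz2, hcase⟩
    · exact le_trans hεle (hR z (le_of_lt (not_le.mp hcase)))
  -- Step 4 : choose a0star
  refine ⟨ε * gs / (2 * gu), by positivity, ?_⟩
  intro a0 ha0pos ha0le γ hγ z hroot
  have hγpos : 0 < γ := lt_of_lt_of_le (by positivity) hγ.1
  set c : ℝ := γ * a0 with hcdef
  have hcpos : 0 < c := mul_pos hγpos ha0pos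
  have hclt : c < ε := by
    have hle : c ≤ (gu / gs) * (ε * gs / (2 * gu)) :=
      mul_le_mul hγ.2 ha0le (le_of_lt ha0pos) (by positivity)
    have heq : (gu / gs) * (ε * gs / (2 * gu)) = ε / 2 := by
      field_simp
    rw [heq] at hle
    linarith
  have heval : z * Q.eval z + (c : ℂ) = 0 := by
    have h' := hroot
    simp only [Polynomial.IsRoot, Polynomial.map_add, Polynomial.map_mul, Polynomial.map_C,
      Polynomial.map_X, Polynomial.eval_add, Polynomial.eval_mul, Polynomial.eval_C,
      Polynomial.eval_X] at h'
    exact h'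
  by_contra hre
  push_neg at hre
  by_cases hnorm : δ ≤ ‖z‖
  · have hb := hbig z hre hnorm
    have hfz : f.eval z = -(c : ℂ) := by
      rw [hfdef, Polynomial.eval_mul, Polynomial.eval_X]
      linear_combination heval
    rw [hfz, norm_neg, Complex.norm_real, Real.norm_eq_abs, abs_of_pos hcpos] at hb
    linarith
  · push_neg at hnorm
    have hQre := hδsmall z (le_of_lt hnorm)
    have hQne : Q.eval z ≠ 0 := by
      intro h'
      rw [h'] at hQre
      simp at hQre
    have hzeq : z = -(c : ℂ) / Q.eval z := by
      field_simp
      linear_combination heval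
    have hns : 0 < Complex.normSq (Q.eval z) := Complex.normSq_pos.mpr hQne
    have : z.re < 0 := by
      rw [hzeq, Complex.div_re]
      simp only [Complex.neg_re, Complex.ofReal_re, Complex.neg_im, Complex.ofReal_im, neg_zero,
        zero_mul, zero_div, add_zero]
      apply div_neg_of_neg_of_pos _ hns
      nlinarith
    linarith
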